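/- arXiv:1907.06123 — 5 statements merged into one kernel-verified Lean document; each statement's English description precedes it below -/
import Mathlib

section
/- Let v ∈ (0,1]ⁿ with a unique maximizer J = argmax_i v_i. Then for every l ≥ 1, any subset S* of size l maximizing the expected score R(S) = (∑_{i∈S} v_i²)/(∑_{i∈S} v_i) over all l-sized subsets of [n] must contain J. -/
/-- The unique best arm `J` belongs to any expected-score-maximizing `l`-sized subset. -/
theorem best_arm_mem_optimal_subset {n : ℕ} (v : Fin n → ℝ)
    (hv : ∀ i, 0 < v i ∧ v i ≤ 1) (J : Fin n) (hJ : ∀ i, i ≠ J → v i < v J)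
    (R : Finset (Fin n) → ℝ)
    (hR : R = fun S => (∑ i ∈ S, (v i) ^ 2) / (∑ i ∈ S, v i))
    (l : ℕ) (hl : 1 ≤ l) (Sstar : Finset (Fin n)) (hcard : Sstar.card = l)
    (hopt : ∀ S : Finset (Fin n), S.card = l → R S ≤ R Sstar) :
    J ∈ Sstar := by
  by_contra hJS
  -- S* is nonempty, pick m ∈ S*
  have hne : Sstar.Nonempty := Finset.card_pos.mp (by omega)
  obtain ⟨m, hm⟩ := hne
  set T := Sstar.erase m with hT
  have hJT : J ∉ T := fun h => hJS (Finset.mem_of_mem_erase h)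
  have hmT : m ∉ T := Finset.notMem_erase m Sstar
  set S' := insert J T with hS'
  have hcard' : S'.card = l := by
    rw [hS', Finset.card_insert_of_notMem hJT, hT, Finset.card_erase_of_mem hm, hcard]
    omega
  set a := v m with ha
  set c := v J with hc
  set A := ∑ i ∈ T, (v i) ^ 2 with hA
  set B := ∑ i ∈ T, v i with hB
  have hac : a < c := hJ m (fun h => hJS (h ▸ hm))
  have ha0 : 0 < a := (hv m).1
  have hc0 : 0 < c := (hv J).1
  have hB0 : 0 ≤ B := Finset.sum_nonneg fun i _ => le_of_lt (hv i).1
  have hAcB : A ≤ c * B := by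
    rw [hA, hB, Finset.mul_sum]
    refine Finset.sum_le_sum fun i hi => ?_
    have hic : v i < c := hJ i (fun h => hJT (h ▸ hi))
    nlinarith [(hv i).1]
  have hsumS : ∑ i ∈ Sstar, (v i) ^ 2 = A + a ^ 2 := by
    rw [hA, ← Finset.sum_erase_add Sstar _ hm]
  have hsumS2 : ∑ i ∈ Sstar, v i = B + a := by
    rw [hB, ← Finset.sum_erase_add Sstar _ hm]
  have hsumS' : ∑ i ∈ S', (v i) ^ 2 = A + c ^ 2 := by
    rw [hA, hS', Finset.sum_insert hJT]; try ring
  have hsumS'2 : ∑ i ∈ S', v i = B + c := by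
    rw [hB, hS', Finset.sum_insert hJT]; try ring
  have hle := hopt S' hcard'
  rw [hR] at hle
  simp only [hsumS, hsumS2, hsumS', hsumS'2] at hle
  rw [div_le_div_iff₀ (by linarith) (by linarith)] at hle
  nlinarith [mul_pos ha0 hc0, mul_nonneg ha0.le hB0]
end

section
/- For any l-sized subsets S, S̃ of [n] with S ≠ S̃, under the parametrization v_S(i) = 1 for i ∈ S and v_S(i) = 1−ε for i ∉ S with ε ∈ (0,1/2), the reward gap satisfies R(S; v_S) − R(S̃; v_S) ≥ ε(1−ε)/(l−ε) > ε/(2l). -/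
/-- Reward gap for the lower-bound parametrization: with `v_S = 1` on `S` and `1−ε`
off `S`, for `l`-sized `S ≠ S̃`, `R(S;v_S) − R(S̃;v_S) ≥ ε(1−ε)/(l−ε) > ε/(2l)`. -/
theorem reward_gap_lower_bound {n : ℕ} (l : ℕ) (hl : 2 ≤ l)
    (S Stilde : Finset (Fin n)) (hS : S.card = l) (hSt : Stilde.card = l)
    (hne : S ≠ Stilde) (ε : ℝ) (hε : ε ∈ Set.Ioo (0 : ℝ) (1 / 2))
    (vS : Fin n → ℝ) (hvS : vS = fun i => if i ∈ S then (1 : ℝ) else 1 - ε)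
    (R : Finset (Fin n) → ℝ)
    (hR : R = fun A => (∑ i ∈ A, (vS i) ^ 2) / (∑ i ∈ A, vS i)) :
    R S - R Stilde ≥ ε * (1 - ε) / ((l : ℝ) - ε) ∧
      ε * (1 - ε) / ((l : ℝ) - ε) > ε / (2 * l) := by
  obtain ⟨hε0, hε2⟩ := hε
  subst hvS hR
  simp only
  set k : ℕ := (Stilde ∩ S).card with hkdef
  have hkle : k ≤ l := by
    have h := Finset.card_le_card (Finset.inter_subset_left (s₁ := Stilde) (s₂ := S))
    omega
  have hklt : k < l := by
    rcases lt_or_eq_of_le hkle with h | h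
    · exact h
    · exfalso
      have h1 : Stilde ∩ S = Stilde :=
        Finset.eq_of_subset_of_card_le Finset.inter_subset_left (by omega)
      have h2 : Stilde ⊆ S := Finset.inter_eq_left.mp h1
      exact hne (Finset.eq_of_subset_of_card_le h2 (by omega)).symm
  have hmk : (Stilde \ S).card = l - k := by
    have := Finset.card_inter_add_card_sdiff Stilde S
    omega
  -- sums over S
  have hsS : (∑ i ∈ S, (if i ∈ S then (1:ℝ) else 1 - ε)) = l := by
    rw [Finset.sum_congr rfl (fun i hi => if_pos hi), Finset.sum_const, hS]
    simp
  have hsS2 : (∑ i ∈ S, (if i ∈ S then (1:ℝ) else 1 - ε) ^ 2) = l := by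
    rw [Finset.sum_congr rfl (fun i hi => by rw [if_pos hi])]
    rw [Finset.sum_congr rfl (fun i _ => one_pow 2), Finset.sum_const, hS]
    simp
  -- sums over Stilde
  have key : ∀ c1 c2 : ℝ, (∑ i ∈ Stilde, (if i ∈ S then c1 else c2))
      = k * c1 + ((l : ℝ) - k) * c2 := by
    intro c1 c2
    rw [← Finset.sum_filter_add_sum_filter_not Stilde (· ∈ S)]
    rw [Finset.sum_congr rfl (fun i hi => if_pos (Finset.mem_filter.mp hi).2),
      Finset.sum_congr rfl (fun i hi => if_neg (Finset.mem_filter.mp hi).2)]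
    rw [Finset.sum_const, Finset.sum_const]
    rw [Finset.filter_mem_eq_inter, ← Finset.sdiff_eq_filter, hmk, ← hkdef]
    simp only [nsmul_eq_mul, Nat.cast_sub hkle]
    try ring
  have hsT : (∑ i ∈ Stilde, (if i ∈ S then (1:ℝ) else 1 - ε))
      = k * 1 + ((l : ℝ) - k) * (1 - ε) := key 1 (1 - ε)
  have hsT2 : (∑ i ∈ Stilde, (if i ∈ S then (1:ℝ) else 1 - ε) ^ 2)
      = k * 1 + ((l : ℝ) - k) * (1 - ε) ^ 2 := by
    rw [Finset.sum_congr rfl (fun i _ => apply_ite (· ^ 2) (i ∈ S) 1 (1 - ε)), key]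
    norm_num
  rw [hsS, hsS2, hsT, hsT2]
  have hl2 : (2 : ℝ) ≤ l := by exact_mod_cast hl
  have hk0 : (0 : ℝ) ≤ k := Nat.cast_nonneg k
  have hkl1 : (k : ℝ) ≤ (l : ℝ) - 1 := by
    have : (k : ℝ) + 1 ≤ l := by exact_mod_cast hklt
    linarith
  have hl0 : (0 : ℝ) < l := by linarith
  have hD : (0 : ℝ) < (k : ℝ) * 1 + ((l : ℝ) - k) * (1 - ε) := by nlinarith
  have hlε : (0 : ℝ) < (l : ℝ) - ε := by linarith
  constructor
  · have hRS : (l : ℝ) / l = 1 := div_self (ne_of_gt hl0)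
    rw [hRS]
    have h1 : (1:ℝ) - ((k : ℝ) * 1 + ((l : ℝ) - k) * (1 - ε) ^ 2) /
        ((k : ℝ) * 1 + ((l : ℝ) - k) * (1 - ε))
        = (((k : ℝ) * 1 + ((l : ℝ) - k) * (1 - ε)) -
          ((k : ℝ) * 1 + ((l : ℝ) - k) * (1 - ε) ^ 2)) /
          ((k : ℝ) * 1 + ((l : ℝ) - k) * (1 - ε)) := by
      rw [eq_div_iff hD.ne', sub_mul, one_mul, div_mul_cancel₀ _ hD.ne']
    rw [ge_iff_le, h1, div_le_div_iff₀ hlε hD]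
    nlinarith [mul_nonneg (mul_nonneg (mul_nonneg hε0.le
      (by linarith : (0:ℝ) ≤ 1 - ε)) (by linarith : (0:ℝ) ≤ (l:ℝ) - k - 1)) hl0.le]
  · rw [gt_iff_lt, div_lt_div_iff₀ (by linarith) hlε]
    nlinarith [mul_pos hε0 (mul_pos hl0 (by linarith : (0:ℝ) < 1 - 2*ε)),
      mul_pos hε0 hε0]
end

section
/- Let p_j and q_j be categorical probabilities p_j = v(j)/(J₊ + (1−ε)J₋) and q_j = v(j)/(J₊ + 1 + (1−ε)(J₋−1)) where v(j) ∈ {1, 1−ε}, ε ∈ (0,1/2), J₊ + J₋ = l and 0 ≤ J₊, J₋ ≤ l. If j is such that neither denominator changes because of j itself (i.e., j ≠ i where i is the switched item), then (p_j − q_j)²/q_j ≤ 8ε²/l³. -/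
set_option maxHeartbeats 1000000


/-- Per-coordinate χ²-type bound for an unswitched item `j`:
`(p_j − q_j)²/q_j ≤ 8ε²/l³`. -/
theorem chi_sq_bound_unswitched (l Jp Jm : ℕ) (hl : 2 ≤ l) (hJ : Jp + Jm = l)
    (hJm : 1 ≤ Jm) (ε : ℝ) (hε : ε ∈ Set.Ioo (0 : ℝ) (1 / 2))
    (vj : ℝ) (hvj : vj = 1 ∨ vj = 1 - ε)
    (p q : ℝ)
    (hp : p = vj / ((Jp : ℝ) + (1 - ε) * (Jm : ℝ)))
    (hq : q = vj / ((Jp : ℝ) + 1 + (1 - ε) * ((Jm : ℝ) - 1))) :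
    (p - q) ^ 2 / q ≤ 8 * ε ^ 2 / (l : ℝ) ^ 3 := by
  obtain ⟨hε0, hε2⟩ := hε
  have hJmN : Jm ≤ l := by omega
  have hJmR : (Jm : ℝ) ≤ l := by exact_mod_cast hJmN
  have hJmR0 : (0 : ℝ) ≤ Jm := Nat.cast_nonneg _
  have hl2 : (2 : ℝ) ≤ l := by exact_mod_cast hl
  have hsum : (Jp : ℝ) + Jm = l := by exact_mod_cast hJ
  set D1 : ℝ := (Jp : ℝ) + (1 - ε) * Jm with hD1def
  set D2 : ℝ := (Jp : ℝ) + 1 + (1 - ε) * ((Jm : ℝ) - 1) with hD2def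
  have hD1eq : D1 = l - ε * Jm := by rw [hD1def, ← hsum]; ring
  have hεJm : ε * Jm ≤ (1 / 2) * l := by
    have := mul_le_mul hε2.le hJmR hJmR0 (by norm_num)
    linarith
  have hD1lb : (l : ℝ) / 2 ≤ D1 := by rw [hD1eq]; linarith
  have hD1pos : 0 < D1 := by linarith
  have hD2eq : D2 = D1 + ε := by rw [hD2def, hD1def]; ring
  have hD2lb : (l : ℝ) / 2 ≤ D2 := by rw [hD2eq]; linarith
  have hD2pos : 0 < D2 := by linarith
  have hvjpos : 0 < vj := by rcases hvj with h | h <;> rw [h] <;> linarith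
  have hvj1 : vj ≤ 1 := by rcases hvj with h | h <;> rw [h] <;> linarith
  have hkey : (p - q) ^ 2 / q = vj * ε ^ 2 / (D1 ^ 2 * D2) := by
    rw [hp, hq]
    field_simp
    rw [hD2eq]
    ring
  rw [hkey]
  rw [div_le_div_iff₀ (by positivity) (by positivity)]
  have hl0 : (0 : ℝ) < l := by linarith
  have h1 : (l : ℝ) / 2 * ((l : ℝ) / 2) * ((l : ℝ) / 2) ≤ D1 ^ 2 * D2 := by
    nlinarith [mul_le_mul hD1lb hD1lb (by positivity) hD1pos.le]
  have h2 : ε ^ 2 * ((l : ℝ) / 2 * ((l : ℝ) / 2) * ((l : ℝ) / 2)) ≤ ε ^ 2 * (D1 ^ 2 * D2) :=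
    mul_le_mul_of_nonneg_left h1 (sq_nonneg ε)
  have h3 : vj * (ε ^ 2 * (l : ℝ) ^ 3) ≤ 1 * (ε ^ 2 * (l : ℝ) ^ 3) :=
    mul_le_mul_of_nonneg_right hvj1 (by positivity)
  ring_nf at h2 h3 ⊢
  linarith [h2, h3]
end

section
/- In the setting of two Plackett-Luce parameters differing only in arm i's score (1−ε versus 1), with ε ∈ (0,1/2), J₊ + J₋ = l ≥ 2, the switched item i itself satisfies (p_i − q_i)²/q_i ≤ 20ε²/l, where p_i = (1−ε)/(l − εJ₋) and q_i = 1/(l + ε(1−J₋)). -/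
set_option maxHeartbeats 1600000


/-- Per-coordinate χ²-type bound for the switched item `i`:
`(p_i − q_i)²/q_i ≤ 20ε²/l`. -/
theorem chi_sq_bound_switched (l Jp Jm : ℕ) (hl : 2 ≤ l) (hJ : Jp + Jm = l)
    (hJm : 1 ≤ Jm) (ε : ℝ) (hε : ε ∈ Set.Ioo (0 : ℝ) (1 / 2))
    (p q : ℝ)
    (hp : p = (1 - ε) / ((l : ℝ) - ε * (Jm : ℝ)))
    (hq : q = 1 / ((l : ℝ) + ε * (1 - (Jm : ℝ)))) :
    (p - q) ^ 2 / q ≤ 20 * ε ^ 2 / (l : ℝ) := by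
  obtain ⟨hε0, hε2⟩ := hε
  have hJm_le : (Jm : ℝ) ≤ (l : ℝ) := by
    have : Jm ≤ l := by omega
    exact_mod_cast this
  have hJm1 : (1 : ℝ) ≤ (Jm : ℝ) := by exact_mod_cast hJm
  have hl2 : (2 : ℝ) ≤ (l : ℝ) := by exact_mod_cast hl
  set L : ℝ := (l : ℝ)
  set A : ℝ := L - ε * (Jm : ℝ) with hA
  set B : ℝ := L + ε * (1 - (Jm : ℝ)) with hB
  have hAge : L / 2 ≤ A := by
    have : ε * (Jm : ℝ) ≤ (1/2) * L := by nlinarith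
    simp only [hA]; linarith
  have hApos : 0 < A := by linarith
  have hBge : L / 2 ≤ B := by
    have : B = A + ε := by simp only [hA, hB]; ring
    linarith
  have hBpos : 0 < B := by linarith
  have hLpos : (0 : ℝ) < L := by linarith
  set D : ℝ := ε * ((Jm : ℝ) - 1) - (L - 1) with hD
  have hkey : p - q = ε * D / (A * B) := by
    rw [hp, hq]
    field_simp
    ring
  have hD2 : D ^ 2 ≤ L ^ 2 := by
    have h1 : 0 ≤ ε * ((Jm : ℝ) - 1) := by nlinarith
    have h2 : ε * ((Jm : ℝ) - 1) ≤ L - 1 := by nlinarith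
    nlinarith
  have hqval : q = 1 / B := hq
  rw [hkey, hqval, div_div_eq_mul_div, div_one, div_pow, div_mul_eq_mul_div]
  rw [div_le_div_iff₀ (by positivity) hLpos]
  have hAA : L / 2 * (L / 2) ≤ A * A :=
    mul_le_mul hAge hAge (by positivity) hApos.le
  have h3 : L ^ 3 / 8 ≤ A ^ 2 * B := by
    have := mul_le_mul hAA hBge (by positivity) (mul_nonneg hApos.le hApos.le)
    nlinarith [this]
  have h4 : ε ^ 2 * (D ^ 2 * L) ≤ ε ^ 2 * (L ^ 2 * L) :=
    mul_le_mul_of_nonneg_left (by nlinarith) (sq_nonneg ε)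
  have h5 : ε ^ 2 * (L ^ 3 / 8) ≤ ε ^ 2 * (A ^ 2 * B) :=
    mul_le_mul_of_nonneg_left h3 (sq_nonneg ε)
  have h6 : ε ^ 2 * (D ^ 2 * L) ≤ 20 * (ε ^ 2 * (A ^ 2 * B)) := by
    have hY : 0 ≤ ε ^ 2 * (A ^ 2 * B) := by positivity
    clear_value D B A L
    linarith
  have h7 := mul_le_mul_of_nonneg_right h6 hBpos.le
  nlinarith [h7]
end

section
/- Combining the per-coordinate bounds: for two Plackett-Luce models over an l-sized subset (l ≥ 2) differing only in one arm's score (1−ε versus 1, ε ∈ (0,1/2)), the KL divergence between the induced categorical winner distributions is at most (l−1)·8ε²/l³ + 20ε²/l ≤ 22ε²/l. -/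
private lemma kl_key_aux (l ε : ℝ) (hl2 : 2 ≤ l) :
    (l - 1) * 8 * ε ^ 2 / l ^ 3 + 20 * ε ^ 2 / l ≤ 22 * ε ^ 2 / l := by
  have hlpos : (0:ℝ) < l := by linarith
  have key : (l - 1) * 8 * ε ^ 2 / l ^ 3 ≤ 2 * ε ^ 2 / l := by
    rw [div_le_div_iff₀ (by positivity) hlpos]
    nlinarith [mul_nonneg (sq_nonneg ε) (mul_nonneg hlpos.le (sq_nonneg (l - 2)))]
  have he : 2 * ε ^ 2 / l + 20 * ε ^ 2 / l = 22 * ε ^ 2 / l := by ring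
  linarith

/-- KL divergence between winner distributions of two Plackett-Luce models over an
`l`-sized subset differing only in one arm's score (`1−ε` vs `1`) is at most
`(l−1)·8ε²/l³ + 20ε²/l ≤ 22ε²/l`. -/
theorem kl_winner_distributions_le {n : ℕ} (l : ℕ) (hl : 2 ≤ l)
    (S : Finset (Fin n)) (hS : S.card = l)
    (ε : ℝ) (hε : ε ∈ Set.Ioo (0 : ℝ) (1 / 2))
    (v w : Fin n → ℝ) (hval : ∀ j ∈ S, v j = 1 ∨ v j = 1 - ε)
    (i : Fin n) (hi : i ∈ S) (hvi : v i = 1 - ε) (hwi : w i = 1)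
    (hvw : ∀ j, j ≠ i → w j = v j)
    (P Q : Fin n → ℝ)
    (hP : P = fun j => v j / ∑ k ∈ S, v k)
    (hQ : Q = fun j => w j / ∑ k ∈ S, w k) :
    ∑ j ∈ S, P j * Real.log (P j / Q j)
        ≤ ((l : ℝ) - 1) * 8 * ε ^ 2 / (l : ℝ) ^ 3 + 20 * ε ^ 2 / (l : ℝ) ∧
      ((l : ℝ) - 1) * 8 * ε ^ 2 / (l : ℝ) ^ 3 + 20 * ε ^ 2 / (l : ℝ)
        ≤ 22 * ε ^ 2 / (l : ℝ) := by
  obtain ⟨hε0, hε2⟩ := hε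
  have hl2 : (2:ℝ) ≤ (l:ℝ) := by exact_mod_cast hl
  have hlpos : (0:ℝ) < (l:ℝ) := by linarith
  set A := ∑ k ∈ S, v k with hAdef
  set B := ∑ k ∈ S, w k with hBdef
  have hvpos : ∀ j ∈ S, 0 < v j := by
    intro j hj; rcases hval j hj with h | h <;> rw [h] <;> linarith
  have hvle : ∀ j ∈ S, v j ≤ 1 := by
    intro j hj; rcases hval j hj with h | h <;> rw [h] <;> linarith
  have hvge : ∀ j ∈ S, 1 - ε ≤ v j := by
    intro j hj; rcases hval j hj with h | h <;> rw [h] <;> linarith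
  have hAge : (l:ℝ) * (1 - ε) ≤ A := by
    calc (l:ℝ) * (1-ε) = ∑ _k ∈ S, (1-ε) := by
          rw [Finset.sum_const, hS, nsmul_eq_mul]
      _ ≤ A := Finset.sum_le_sum hvge
  have hAle : A ≤ (l:ℝ) := by
    calc A ≤ ∑ _k ∈ S, (1:ℝ) := Finset.sum_le_sum hvle
      _ = (l:ℝ) := by rw [Finset.sum_const, hS, nsmul_eq_mul, mul_one]
  have hAhalf : (l:ℝ)/2 ≤ A := by nlinarith
  have hApos : 0 < A := by linarith
  have hBeq : B = A + ε := by
    have h1 : A = v i + ∑ k ∈ S.erase i, v k := (Finset.add_sum_erase S v hi).symm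
    have h2 : B = w i + ∑ k ∈ S.erase i, w k := (Finset.add_sum_erase S w hi).symm
    have h3 : ∑ k ∈ S.erase i, w k = ∑ k ∈ S.erase i, v k :=
      Finset.sum_congr rfl (fun j hj => hvw j (Finset.ne_of_mem_erase hj))
    rw [h2, h3, hwi, h1, hvi]; ring
  have hBpos : 0 < B := by rw [hBeq]; linarith
  have hBhalf : (l:ℝ)/2 ≤ B := by rw [hBeq]; linarith
  have hwpos : ∀ j ∈ S, 0 < w j := by
    intro j hj
    by_cases hji : j = i
    · rw [hji, hwi]; norm_num
    · rw [hvw j hji]; exact hvpos j hj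
  have hPpos : ∀ j ∈ S, 0 < P j := by
    intro j hj; rw [hP]; exact div_pos (hvpos j hj) hApos
  have hQpos : ∀ j ∈ S, 0 < Q j := by
    intro j hj; rw [hQ]; exact div_pos (hwpos j hj) hBpos
  have hsumP : ∑ j ∈ S, P j = 1 := by
    rw [hP]; rw [← Finset.sum_div]; exact div_self hApos.ne'
  have hsumQ : ∑ j ∈ S, Q j = 1 := by
    rw [hQ]; rw [← Finset.sum_div]; exact div_self hBpos.ne'
  -- KL ≤ chi-squared
  have hchi : ∑ j ∈ S, P j * Real.log (P j / Q j)
      ≤ ∑ j ∈ S, (P j - Q j)^2 / Q j := by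
    have step : ∀ j ∈ S, P j * Real.log (P j / Q j)
        ≤ (P j - Q j)^2 / Q j + (P j - Q j) := by
      intro j hj
      have hp := hPpos j hj
      have hq := hQpos j hj
      have hlog : Real.log (P j / Q j) ≤ P j / Q j - 1 :=
        Real.log_le_sub_one_of_pos (div_pos hp hq)
      have h1 : P j * Real.log (P j / Q j) ≤ P j * (P j / Q j - 1) :=
        mul_le_mul_of_nonneg_left hlog hp.le
      have h2 : P j * (P j / Q j - 1) = (P j - Q j)^2 / Q j + (P j - Q j) := by
        field_simp
        ring
      linarith [h1, h2 ▸ h1]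
    calc ∑ j ∈ S, P j * Real.log (P j / Q j)
        ≤ ∑ j ∈ S, ((P j - Q j)^2 / Q j + (P j - Q j)) := Finset.sum_le_sum step
      _ = ∑ j ∈ S, (P j - Q j)^2 / Q j + (∑ j ∈ S, P j - ∑ j ∈ S, Q j) := by
          rw [Finset.sum_add_distrib, Finset.sum_sub_distrib]
      _ = ∑ j ∈ S, (P j - Q j)^2 / Q j := by rw [hsumP, hsumQ]; ring
  constructor
  · -- bound the chi-squared sum
    refine hchi.trans ?_
    rw [← Finset.sum_erase_add S _ hi]
    have hterm : ∀ j ∈ S.erase i, (P j - Q j)^2 / Q j ≤ 8 * ε^2 / (l:ℝ)^3 := by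
      intro j hj
      have hjS : j ∈ S := Finset.mem_of_mem_erase hj
      have hji : j ≠ i := Finset.ne_of_mem_erase hj
      have hv := hvpos j hjS
      have hv1 := hvle j hjS
      have hPj : P j = v j / A := by rw [hP]
      have hQj : Q j = v j / B := by rw [hQ]; simp only; rw [hvw j hji]
      have heq : (P j - Q j)^2 / Q j = v j * ε^2 / (A^2 * B) := by
        rw [hPj, hQj, hBeq]
        field_simp
        ring
      rw [heq, div_le_div_iff₀ (by positivity) (by positivity)]
      have hA2 : ((l:ℝ)/2)^2 ≤ A^2 := pow_le_pow_left₀ (by positivity) hAhalf 2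
      have hA2B : ((l:ℝ)/2)^2 * ((l:ℝ)/2) ≤ A^2 * B :=
        mul_le_mul hA2 hBhalf (by positivity) (sq_nonneg A)
      have h1 : ε^2 * ((l:ℝ)^3/8) ≤ ε^2 * (A^2*B) := by
        have he : ((l:ℝ)/2)^2 * ((l:ℝ)/2) = (l:ℝ)^3/8 := by ring
        exact mul_le_mul_of_nonneg_left (he ▸ hA2B) (sq_nonneg ε)
      have h2 : v j * (ε^2 * (l:ℝ)^3) ≤ 1 * (ε^2 * (l:ℝ)^3) :=
        mul_le_mul_of_nonneg_right hv1 (by positivity)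
      nlinarith [h1, h2]
    have hsum1 : ∑ j ∈ S.erase i, (P j - Q j)^2 / Q j
        ≤ ((l:ℝ) - 1) * 8 * ε ^ 2 / (l:ℝ)^3 := by
      calc ∑ j ∈ S.erase i, (P j - Q j)^2 / Q j
          ≤ ∑ _j ∈ S.erase i, 8 * ε^2 / (l:ℝ)^3 := Finset.sum_le_sum hterm
        _ = ((S.erase i).card : ℝ) * (8 * ε^2 / (l:ℝ)^3) := by
            rw [Finset.sum_const, nsmul_eq_mul]
        _ = ((l:ℝ) - 1) * 8 * ε ^ 2 / (l:ℝ)^3 := by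
            rw [Finset.card_erase_of_mem hi, hS]
            have : ((l - 1 : ℕ) : ℝ) = (l:ℝ) - 1 := by
              have : 1 ≤ l := by omega
              push_cast [this]; ring
            rw [this]; ring
    have hterm2 : (P i - Q i)^2 / Q i ≤ 20 * ε^2 / (l:ℝ) := by
      have hPi : P i = (1 - ε) / A := by rw [hP]; simp only; rw [hvi]
      have hQi : Q i = 1 / B := by rw [hQ]; simp only; rw [hwi]
      have heq : (P i - Q i)^2 / Q i = (ε * (A + ε - 1))^2 / (A^2 * B) := by
        rw [hPi, hQi, hBeq]
        field_simp
        ring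
      have hmul : 2 * (1 - ε) ≤ (l:ℝ) * (1 - ε) :=
        mul_le_mul_of_nonneg_right hl2 (by linarith)
      have hAlow : 0 ≤ A + ε - 1 := by linarith
      have hAup : A + ε - 1 ≤ A := by linarith
      have h1 : (ε * (A + ε - 1))^2 ≤ ε^2 * A^2 := by
        have h := mul_self_le_mul_self hAlow hAup
        calc (ε*(A+ε-1))^2 = ε^2 * ((A+ε-1)*(A+ε-1)) := by ring
          _ ≤ ε^2 * (A*A) := mul_le_mul_of_nonneg_left h (sq_nonneg ε)
          _ = ε^2*A^2 := by ring
      rw [heq, div_le_div_iff₀ (by positivity) hlpos]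
      have h2 : ε^2*A^2*((l:ℝ)/2) ≤ ε^2*A^2*B :=
        mul_le_mul_of_nonneg_left hBhalf (by positivity)
      have h3 : (ε*(A+ε-1))^2 * (l:ℝ) ≤ ε^2*A^2*(l:ℝ) :=
        mul_le_mul_of_nonneg_right h1 hlpos.le
      have h4 : (0:ℝ) ≤ ε^2*A^2*B := by positivity
      linarith [h2, h3, h4]
    linarith
  · exact kl_key_aux (l:ℝ) ε hl2
end
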